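/- arXiv:1802.06405 — 6 statements merged into one kernel-verified Lean document; each statement's English description precedes it below -/
import Mathlib

section
/- For every positive integer k, let A be the set of integers of the form ∑_{i=0}^{k-1} α_i · 10^i where each α_i ∈ {0, 1, 3}. Then |A| = 3^k, |A + A| = 6^k, and |A - A| = 7^k. -/
open Pointwise

private def dval (k : ℕ) (f : Fin k → ℤ) : ℤ := ∑ i : Fin k, f i * 10 ^ (i : ℕ)

private lemma dval_zero (k : ℕ) (d : Fin k → ℤ) (hd : ∀ i, |d i| ≤ 9)
    (h : dval k d = 0) : ∀ i, d i = 0 := by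
  induction k with
  | zero => intro i; exact i.elim0
  | succ n ih =>
    have hsum : dval (n+1) d = d 0 + 10 * dval n (fun i => d i.succ) := by
      rw [dval, Fin.sum_univ_succ, dval, Finset.mul_sum]
      congr 1
      · simp
      · refine Finset.sum_congr rfl fun i _ => ?_
        rw [Fin.val_succ, pow_succ]
        ring
    rw [hsum] at h
    have h10 : (10 : ℤ) ∣ d 0 := ⟨-(dval n fun i => d i.succ), by linarith⟩
    have hd0 : d 0 = 0 := Int.eq_zero_of_abs_lt_dvd h10 (by have := hd 0; omega)
    have hrest : dval n (fun i => d i.succ) = 0 := by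
      rw [hd0] at h; linarith
    have := ih (fun i => d i.succ) (fun i => hd i.succ) hrest
    intro i
    refine Fin.cases hd0 (fun j => this j) i

private lemma dval_injOn (k : ℕ) (S : Finset ℤ)
    (hB : ∀ u ∈ S, ∀ v ∈ S, |u - v| ≤ 9) :
    Set.InjOn (dval k) (Fintype.piFinset fun _ : Fin k => S) := by
  intro f hf g hg hfg
  simp only [Finset.coe_sort_coe, Set.mem_setOf_eq, Finset.mem_coe,
    Fintype.mem_piFinset] at hf hg
  funext i
  have h0 : dval k (fun i => f i - g i) = 0 := by
    simp only [dval, sub_mul, Finset.sum_sub_distrib]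
    rw [show (∑ i : Fin k, f i * 10 ^ (i:ℕ)) = dval k f from rfl,
      show (∑ i : Fin k, g i * 10 ^ (i:ℕ)) = dval k g from rfl, hfg, sub_self]
  have := dval_zero k (fun i => f i - g i) (fun i => hB _ (hf i) _ (hg i)) h0 i
  linarith

private lemma image_card (k : ℕ) (S : Finset ℤ)
    (hB : ∀ u ∈ S, ∀ v ∈ S, |u - v| ≤ 9) :
    (Finset.image (dval k) (Fintype.piFinset fun _ : Fin k => S)).card
      = S.card ^ k := by
  rw [Finset.card_image_of_injOn (dval_injOn k S hB), Fintype.card_piFinset]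
  simp

private lemma image_add (k : ℕ) (S T U : Finset ℤ)
    (hU : ∀ u ∈ U, ∃ s ∈ S, ∃ t ∈ T, s + t = u)
    (hST : ∀ s ∈ S, ∀ t ∈ T, s + t ∈ U) :
    Finset.image (dval k) (Fintype.piFinset fun _ : Fin k => S)
      + Finset.image (dval k) (Fintype.piFinset fun _ : Fin k => T)
      = Finset.image (dval k) (Fintype.piFinset fun _ : Fin k => U) := by
  ext x
  simp only [Finset.mem_add, Finset.mem_image, Fintype.mem_piFinset]
  constructor
  · rintro ⟨a, ⟨f, hf, rfl⟩, b, ⟨g, hg, rfl⟩, rfl⟩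
    refine ⟨fun i => f i + g i, fun i => hST _ (hf i) _ (hg i), ?_⟩
    simp [dval, add_mul, Finset.sum_add_distrib]
  · rintro ⟨p, hp, rfl⟩
    choose s hs t ht hst using fun i => hU (p i) (hp i)
    refine ⟨dval k s, ⟨s, hs, rfl⟩, dval k t, ⟨t, ht, rfl⟩, ?_⟩
    simp only [dval, ← Finset.sum_add_distrib, ← add_mul]
    exact Finset.sum_congr rfl fun i _ => by rw [hst]

private lemma image_sub (k : ℕ) (S T U : Finset ℤ)
    (hU : ∀ u ∈ U, ∃ s ∈ S, ∃ t ∈ T, s - t = u)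
    (hST : ∀ s ∈ S, ∀ t ∈ T, s - t ∈ U) :
    Finset.image (dval k) (Fintype.piFinset fun _ : Fin k => S)
      - Finset.image (dval k) (Fintype.piFinset fun _ : Fin k => T)
      = Finset.image (dval k) (Fintype.piFinset fun _ : Fin k => U) := by
  ext x
  simp only [Finset.mem_sub, Finset.mem_image, Fintype.mem_piFinset]
  constructor
  · rintro ⟨a, ⟨f, hf, rfl⟩, b, ⟨g, hg, rfl⟩, rfl⟩
    refine ⟨fun i => f i - g i, fun i => hST _ (hf i) _ (hg i), ?_⟩
    simp [dval, sub_mul, Finset.sum_sub_distrib]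
  · rintro ⟨p, hp, rfl⟩
    choose s hs t ht hst using fun i => hU (p i) (hp i)
    refine ⟨dval k s, ⟨s, hs, rfl⟩, dval k t, ⟨t, ht, rfl⟩, ?_⟩
    simp only [dval, ← Finset.sum_sub_distrib, ← sub_mul]
    exact Finset.sum_congr rfl fun i _ => by rw [hst]

theorem stmt_1 (k : ℕ) (hk : 1 ≤ k) (A : Finset ℤ)
    (hA : A = Finset.image (fun f => ∑ i : Fin k, f i * 10 ^ (i : ℕ))
      (Fintype.piFinset fun _ : Fin k => ({0, 1, 3} : Finset ℤ))) :
    A.card = 3 ^ k ∧ (A + A).card = 6 ^ k ∧ (A - A).card = 7 ^ k := by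
  have hA' : A = Finset.image (dval k) (Fintype.piFinset fun _ : Fin k => ({0, 1, 3} : Finset ℤ)) := hA
  have hS : ∀ u ∈ ({0, 1, 3} : Finset ℤ), ∀ v ∈ ({0, 1, 3} : Finset ℤ), |u - v| ≤ 9 := by decide
  have hUa : ∀ u ∈ ({0,1,2,3,4,6} : Finset ℤ), ∀ v ∈ ({0,1,2,3,4,6} : Finset ℤ), |u - v| ≤ 9 := by decide
  have hUs : ∀ u ∈ ({-3,-2,-1,0,1,2,3} : Finset ℤ), ∀ v ∈ ({-3,-2,-1,0,1,2,3} : Finset ℤ), |u - v| ≤ 9 := by decide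
  refine ⟨?_, ?_, ?_⟩
  · rw [hA', image_card k _ hS]
    norm_num
  · rw [hA', image_add k _ _ ({0,1,2,3,4,6} : Finset ℤ) (by decide) (by decide),
      image_card k _ hUa]
    norm_num
  · rw [hA', image_sub k _ _ ({-3,-2,-1,0,1,2,3} : Finset ℤ) (by decide) (by decide),
      image_card k _ hUs]
    norm_num
end

section
/- For every natural number n ≥ 2, let A = {2^i - 2^j : 1 ≤ j < i ≤ n} ∪ {-(2^i - 2^j) : 1 ≤ j < i ≤ n} (a set of at most 2·C(n,2) real numbers). Consider the graph G on A whose edges connect 2^i - 2^j and -(2^k - 2^j) for all 1 ≤ j < i ≤ n, 1 ≤ j < k ≤ n with the two endpoints distinct. Then the set of sums along edges, {a + b : (a,b) an edge of G}, has at most n^2 elements, and the set of ratios along edges, {a/b : (a,b) an edge of G}, has at most 2·n^2 elements. -/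
/-- Sums and ratios along the edges of the graph connecting `2^i - 2^j` to
`-(2^k - 2^j)` are few. -/
theorem stmt_2 (n : ℕ) (hn : 2 ≤ n) (E : ℝ → ℝ → Prop)
    (hE : ∀ a b : ℝ, E a b ↔ ∃ i j k : ℕ, 1 ≤ j ∧ j < i ∧ i ≤ n ∧ j < k ∧ k ≤ n ∧
      a = 2 ^ i - 2 ^ j ∧ b = -(2 ^ k - 2 ^ j) ∧ a ≠ b) :
    {x : ℝ | ∃ a b, E a b ∧ x = a + b}.ncard ≤ n ^ 2 ∧
    {x : ℝ | ∃ a b, E a b ∧ (x = a / b ∨ x = b / a)}.ncard ≤ 2 * n ^ 2 := by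
  have key : ∀ q : ℕ, 1 ≤ q → (2:ℝ)^q - 1 ≠ 0 := by
    intro q hq
    have : (2:ℝ) ≤ 2^q := by
      calc (2:ℝ) = 2^1 := (pow_one 2).symm
      _ ≤ 2^q := pow_le_pow_right₀ (by norm_num) hq
    linarith
  constructor
  · set S := (Finset.Icc 1 n ×ˢ Finset.Icc 1 n).image
        (fun p : ℕ × ℕ => (2:ℝ)^p.1 - 2^p.2) with hS
    have hsub : {x : ℝ | ∃ a b, E a b ∧ x = a + b} ⊆ ↑S := by
      rintro x ⟨a, b, hab, rfl⟩
      obtain ⟨i, j, k, hj, hji, hin, hjk, hkn, rfl, rfl, hne⟩ := (hE _ _).1 hab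
      refine Finset.mem_coe.2 (Finset.mem_image.2 ⟨(i,k), ?_, by ring⟩)
      exact Finset.mem_product.2 ⟨Finset.mem_Icc.2 ⟨by omega, hin⟩,
        Finset.mem_Icc.2 ⟨by omega, hkn⟩⟩
    calc _ ≤ S.card := by
          rw [← Set.ncard_coe_finset]
          exact Set.ncard_le_ncard hsub (Finset.finite_toSet S)
      _ ≤ (Finset.Icc 1 n ×ˢ Finset.Icc 1 n).card := Finset.card_image_le
      _ = n * n := by simp [Nat.card_Icc]
      _ = n ^ 2 := (sq n).symm
  · set S := (Finset.Icc 1 n ×ˢ Finset.Icc 1 n).image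
        (fun p : ℕ × ℕ => -((2:ℝ)^p.1 - 1) / (2^p.2 - 1)) with hS
    have hsub : {x : ℝ | ∃ a b, E a b ∧ (x = a / b ∨ x = b / a)} ⊆ ↑S := by
      rintro x ⟨a, b, hab, hx⟩
      obtain ⟨i, j, k, hj, hji, hin, hjk, hkn, ha, hb, hne⟩ := (hE _ _).1 hab
      have h2j : (2:ℝ)^j ≠ 0 := by positivity
      have ha' : a = 2^j * (2^(i-j) - 1) := by
        rw [ha, mul_sub, mul_one, ← pow_add]
        congr 2
        omega
      have hb' : b = -(2^j * (2^(k-j) - 1)) := by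
        rw [hb, mul_sub, mul_one, ← pow_add]
        congr 3
        omega
      have hp : (2:ℝ)^(i-j) - 1 ≠ 0 := key _ (by omega)
      have hq : (2:ℝ)^(k-j) - 1 ≠ 0 := key _ (by omega)
      have mem1 : (i-j, k-j) ∈ Finset.Icc 1 n ×ˢ Finset.Icc 1 n :=
        Finset.mem_product.2 ⟨Finset.mem_Icc.2 ⟨by omega, by omega⟩,
          Finset.mem_Icc.2 ⟨by omega, by omega⟩⟩
      have mem2 : (k-j, i-j) ∈ Finset.Icc 1 n ×ˢ Finset.Icc 1 n :=
        Finset.mem_product.2 ⟨Finset.mem_Icc.2 ⟨by omega, by omega⟩,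
          Finset.mem_Icc.2 ⟨by omega, by omega⟩⟩
      rcases hx with rfl | rfl
      · refine Finset.mem_coe.2 (Finset.mem_image.2 ⟨(i-j, k-j), mem1, ?_⟩)
        rw [ha', hb']
        field_simp
      · refine Finset.mem_coe.2 (Finset.mem_image.2 ⟨(k-j, i-j), mem2, ?_⟩)
        rw [ha', hb']
        field_simp
    calc _ ≤ S.card := by
          rw [← Set.ncard_coe_finset]
          exact Set.ncard_le_ncard hsub (Finset.finite_toSet S)
      _ ≤ (Finset.Icc 1 n ×ˢ Finset.Icc 1 n).card := Finset.card_image_le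
      _ = n * n := by simp [Nat.card_Icc]
      _ ≤ 2 * n ^ 2 := by nlinarith
end

section
/- For every natural number n ≥ 4, the graph G of the previous construction (on vertex set A = {±(2^i - 2^j) : 1 ≤ j < i ≤ n}, with 2^i - 2^j adjacent to -(2^k - 2^j) whenever j < i, j < k, i ≠ k) has at least 2·C(n,3) edges. -/
/-! Writing each edge as `s(2^i - 2^j, -(2^k - 2^j))`, the positive endpoint determines `(j, i)`
and the negative one determines `(j, k)`, because `2^(b-1) ≤ 2^b - 2^a < 2^b` for `a < b` reads `b`
off the binary length and then `a` off the difference. So the edges are in bijection with the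
triples `j < i, k` in `[1, n]` with `i ≠ k`, and there are `∑ⱼ 2·C(n - j, 2) = 2·C(n, 3)` of those. -/

open Finset

namespace PowDiffGraph

lemma log_two_pow_sub_two_pow {a b : ℕ} (h : a < b) : Nat.log 2 (2 ^ b - 2 ^ a) = b - 1 := by
  have hb : 2 ^ b = 2 * 2 ^ (b - 1) := by rw [← pow_succ', Nat.sub_add_cancel (by omega)]
  have ha : 2 ^ a ≤ 2 ^ (b - 1) := Nat.pow_le_pow_right two_pos (by omega)
  have ha₀ : 0 < 2 ^ a := Nat.two_pow_pos a
  refine Nat.log_eq_of_pow_le_of_lt_pow (by omega) ?_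
  rw [Nat.sub_add_cancel (by omega)]
  omega

lemma two_pow_sub_two_pow_inj {a b c d : ℕ} (hab : a < b) (hcd : c < d)
    (h : (2 : ℝ) ^ b - 2 ^ a = 2 ^ d - 2 ^ c) : a = c ∧ b = d := by
  have h₁ : 2 ^ a ≤ 2 ^ b := Nat.pow_le_pow_right two_pos hab.le
  have h₂ : 2 ^ c ≤ 2 ^ d := Nat.pow_le_pow_right two_pos hcd.le
  have hnat : 2 ^ b - 2 ^ a = 2 ^ d - 2 ^ c := by
    exact_mod_cast (show ((2 ^ b - 2 ^ a : ℕ) : ℝ) = (2 ^ d - 2 ^ c : ℕ) by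
      push_cast [Nat.cast_sub h₁, Nat.cast_sub h₂]; exact h)
  have hbd : b = d := by
    have := congrArg (Nat.log 2) hnat
    rw [log_two_pow_sub_two_pow hab, log_two_pow_sub_two_pow hcd] at this
    omega
  subst hbd
  have hac : 2 ^ a = 2 ^ c := by omega
  exact ⟨Nat.pow_right_injective le_rfl hac, rfl⟩

lemma two_pow_sub_two_pow_pos {a b : ℕ} (h : a < b) : (0 : ℝ) < 2 ^ b - 2 ^ a :=
  sub_pos.2 (pow_lt_pow_right₀ one_lt_two h)

lemma sum_range_choose_eq_choose_succ (m k : ℕ) :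
    ∑ i ∈ range m, i.choose k = m.choose (k + 1) := by
  induction m with
  | zero => simp
  | succ m ih => rw [sum_range_succ, ih, Nat.choose_succ_succ' m k, add_comm]

noncomputable def edge (p : Σ _ : ℕ, ℕ × ℕ) : Sym2 ℝ :=
  s((2 : ℝ) ^ p.2.1 - 2 ^ p.1, -((2 : ℝ) ^ p.2.2 - 2 ^ p.1))

def edgeLabels (n : ℕ) : Finset (Σ _ : ℕ, ℕ × ℕ) :=
  (Icc 1 n).sigma fun j => (Ioc j n).offDiag

lemma edge_injOn : Set.InjOn edge {p | p.1 < p.2.1 ∧ p.1 < p.2.2} := by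
  rintro ⟨j, i, k⟩ ⟨hi, hk⟩ ⟨j', i', k'⟩ ⟨hi', hk'⟩ h
  rcases Sym2.eq_iff.1 h with ⟨h₁, h₂⟩ | ⟨h₁, -⟩
  · obtain ⟨rfl, rfl⟩ := two_pow_sub_two_pow_inj hi hi' h₁
    obtain ⟨-, rfl⟩ := two_pow_sub_two_pow_inj hk hk' (neg_inj.1 h₂)
    rfl
  · -- a positive endpoint cannot equal a negative one
    linarith [two_pow_sub_two_pow_pos hi, two_pow_sub_two_pow_pos hk']

lemma card_edgeLabels (n : ℕ) : #(edgeLabels n) = 2 * n.choose 3 := by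
  have two_mul_choose_two (m : ℕ) : m * m - m = 2 * m.choose 2 := by
    rw [Nat.choose_two_right, Nat.mul_div_cancel' (Nat.even_mul_pred_self m).two_dvd,
      Nat.mul_sub_one]
  have reflect : ∑ j ∈ Icc 1 n, (n - j).choose 2 = ∑ m ∈ range n, m.choose 2 :=
    sum_nbij' (n - ·) (n - ·) (by intro j hj; simp at hj ⊢; omega)
      (by intro m hm; simp at hm ⊢; omega) (by intro j hj; simp at hj; omega)
      (by intro m hm; simp at hm; omega) fun _ _ => rfl
  rw [edgeLabels, card_sigma]
  simp_rw [offDiag_card, Nat.card_Ioc, two_mul_choose_two]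
  rw [← mul_sum, reflect, sum_range_choose_eq_choose_succ]

lemma edge_image_edgeLabels (n : ℕ) :
    edge '' edgeLabels n = {e : Sym2 ℝ | ∃ i j k : ℕ, 1 ≤ j ∧ j < i ∧ i ≤ n ∧ j < k ∧ k ≤ n ∧
      i ≠ k ∧ e = s((2:ℝ) ^ i - 2 ^ j, -((2:ℝ) ^ k - 2 ^ j))} := by
  ext e
  simp only [edgeLabels, coe_sigma, Set.mem_image, Set.mem_sigma_iff, coe_Icc, Set.mem_Icc,
    coe_offDiag, Set.mem_offDiag, coe_Ioc, Set.mem_Ioc, Set.mem_ofPred_eq, Sigma.exists,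
    Prod.exists, edge]
  constructor
  · rintro ⟨j, i, k, ⟨⟨h1, -⟩, ⟨hji, hi⟩, ⟨hjk, hk⟩, hik⟩, rfl⟩
    exact ⟨i, j, k, h1, hji, hi, hjk, hk, hik, rfl⟩
  · rintro ⟨i, j, k, h1, hji, hi, hjk, hk, hik, rfl⟩
    exact ⟨j, i, k, ⟨⟨h1, by omega⟩, ⟨hji, hi⟩, ⟨hjk, hk⟩, hik⟩, rfl⟩

end PowDiffGraph

open PowDiffGraph in
theorem stmt_3_general (n : ℕ) :
    2 * Nat.choose n 3 ≤
      {e : Sym2 ℝ | ∃ i j k : ℕ, 1 ≤ j ∧ j < i ∧ i ≤ n ∧ j < k ∧ k ≤ n ∧ i ≠ k ∧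
        e = s((2:ℝ) ^ i - 2 ^ j, -((2:ℝ) ^ k - 2 ^ j))}.ncard := by
  have hinj : Set.InjOn edge (edgeLabels n) := edge_injOn.mono fun p hp => by
    simp only [edgeLabels, mem_coe, mem_sigma, mem_offDiag, mem_Ioc] at hp
    exact ⟨hp.2.1.1, hp.2.2.1.1⟩
  rw [← edge_image_edgeLabels, hinj.ncard_image, Set.ncard_coe_finset, card_edgeLabels]

/-- The graph on `A = {±(2^i - 2^j)}` with edges `{2^i - 2^j, -(2^k - 2^j)}`
(for `j < i`, `j < k`, `i ≠ k`) has at least `2 * C(n,3)` edges. -/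
theorem stmt_3 (n : ℕ) (hn : 4 ≤ n) :
    2 * Nat.choose n 3 ≤
      {e : Sym2 ℝ | ∃ i j k : ℕ, 1 ≤ j ∧ j < i ∧ i ≤ n ∧ j < k ∧ k ≤ n ∧ i ≠ k ∧
        e = s((2:ℝ) ^ i - 2 ^ j, -((2:ℝ) ^ k - 2 ^ j))}.ncard :=
  stmt_3_general n
end

section
/- Let k be a positive integer and let p_1, …, p_k, q_1, …, q_k be distinct primes with each q_j ≥ 3. Consider the set A = {p_i / q_j : 1 ≤ i, j ≤ k} ∪ {(q_j - 1)·p_i / q_j : 1 ≤ i, j ≤ k} of rational numbers, and the perfect matching M consisting of the pairs (p_i/q_j, (q_j - 1)·p_i/q_j). Then all 2k^2 elements of A are pairwise distinct, the set of sums along the matching edges {p_i/q_j + (q_j-1)·p_i/q_j : 1 ≤ i,j ≤ k} equals {p_i : 1 ≤ i ≤ k} and has exactly k elements, and the set of ratios {((q_j-1)·p_i/q_j) / (p_i/q_j) : 1 ≤ i,j ≤ k} equals {q_j - 1 : 1 ≤ j ≤ k} and has exactly k elements. -/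
/-- The matching construction with primes `p_i, q_j`: all `2k²` elements are
distinct, the sums along matching edges are exactly the `p_i`, and the ratios
are exactly the `q_j - 1`. -/
theorem stmt_5 (k : ℕ) (hk : 1 ≤ k) (p q : Fin k → ℕ)
    (hp : ∀ i, (p i).Prime) (hq : ∀ j, (q j).Prime) (hq3 : ∀ j, 3 ≤ q j)
    (hpinj : Function.Injective p) (hqinj : Function.Injective q)
    (hpq : ∀ i j, p i ≠ q j) :
    Function.Injective (fun x : Fin k × Fin k × Bool =>
      if x.2.2 then ((q x.2.1 : ℚ) - 1) * p x.1 / q x.2.1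
      else (p x.1 : ℚ) / q x.2.1) ∧
    {s : ℚ | ∃ i j : Fin k, s = (p i : ℚ) / q j + ((q j : ℚ) - 1) * p i / q j} =
      {s : ℚ | ∃ i : Fin k, s = (p i : ℚ)} ∧
    {s : ℚ | ∃ i j : Fin k, s = (p i : ℚ) / q j + ((q j : ℚ) - 1) * p i / q j}.ncard = k ∧
    {r : ℚ | ∃ i j : Fin k, r = (((q j : ℚ) - 1) * p i / q j) / ((p i : ℚ) / q j)} =
      {r : ℚ | ∃ j : Fin k, r = (q j : ℚ) - 1} ∧
    {r : ℚ | ∃ i j : Fin k, r = (((q j : ℚ) - 1) * p i / q j) / ((p i : ℚ) / q j)}.ncard = k := by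
  have hq0 : ∀ j, (q j : ℚ) ≠ 0 := fun j => Nat.cast_ne_zero.mpr (hq j).pos.ne'
  have hp0 : ∀ i, (p i : ℚ) ≠ 0 := fun i => Nat.cast_ne_zero.mpr (hp i).pos.ne'
  have hqq : ∀ j j' : Fin k, q j ∣ q j' → j = j' := fun j j' hd =>
    hqinj ((Nat.prime_dvd_prime_iff_eq (hq j) (hq j')).mp hd)
  have hqp : ∀ j i, ¬ q j ∣ p i := fun j i hd =>
    hpq i j ((Nat.prime_dvd_prime_iff_eq (hq j) (hp i)).mp hd).symm
  have hqm1 : ∀ j, ¬ q j ∣ (q j - 1) := fun j hd => by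
    have h1 := Nat.le_of_dvd (by have := hq3 j; omega) hd
    have := hq3 j; omega
  have hcast : ∀ j, ((q j : ℚ) - 1) = ((q j - 1 : ℕ) : ℚ) := fun j => by
    have h1 : 1 ≤ q j := by have := hq3 j; omega
    push_cast [Nat.cast_sub h1]; ring
  -- the key mixed-case impossibility: p i = (q j - 1) * p i' is impossible
  have hmix : ∀ i i' j, p i ≠ (q j - 1) * p i' := by
    intro i i' j h
    have hd : p i' ∣ p i := ⟨q j - 1, by rw [h]; ring⟩
    have he : p i' = p i := (Nat.prime_dvd_prime_iff_eq (hp i') (hp i)).mp hd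
    rw [← he] at h
    have hpos := (hp i').pos
    have hm : 2 ≤ q j - 1 := by have := hq3 j; omega
    have h2 : 2 * p i' ≤ (q j - 1) * p i' := Nat.mul_le_mul_right _ hm
    omega
  refine ⟨?_, ?_⟩
  · -- injectivity
    rintro ⟨i, j, b⟩ ⟨i', j', b'⟩ h
    simp only at h
    cases b <;> cases b' <;> simp only [Bool.false_eq_true, if_false, if_true] at h
    · -- false, false
      rw [div_eq_div_iff (hq0 j) (hq0 j')] at h
      have hN : p i * q j' = p i' * q j := by exact_mod_cast h
      have hdq : q j ∣ p i * q j' := ⟨p i', by linarith [hN]⟩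
      rcases (Nat.Prime.dvd_mul (hq j)).mp hdq with hd | hd
      · exact absurd hd (hqp j i)
      · have hj : j = j' := hqq j j' hd
        subst hj
        have : p i = p i' := by
          have := (hq j).pos
          exact Nat.eq_of_mul_eq_mul_right this hN
        have hi : i = i' := hpinj this
        subst hi; rfl
    · -- false, true : p i / q j = (q j' - 1) p i' / q j'
      rw [hcast j', div_eq_div_iff (hq0 j) (hq0 j')] at h
      have hN : p i * q j' = (q j' - 1) * p i' * q j := by exact_mod_cast h
      have hdq : q j' ∣ (q j' - 1) * p i' * q j := ⟨p i, by linarith [hN]⟩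
      rcases (Nat.Prime.dvd_mul (hq j')).mp hdq with hd | hd
      · rcases (Nat.Prime.dvd_mul (hq j')).mp hd with hd' | hd'
        · exact absurd hd' (hqm1 j')
        · exact absurd hd' (hqp j' i')
      · have hj : j' = j := hqq j' j hd
        subst hj
        have hN' : p i = (q j' - 1) * p i' := by
          have := (hq j').pos
          exact Nat.eq_of_mul_eq_mul_right this hN
        exact absurd hN' (hmix i i' j')
    · -- true, false : symmetric
      rw [hcast j, div_eq_div_iff (hq0 j) (hq0 j')] at h
      have hN : (q j - 1) * p i * q j' = p i' * q j := by exact_mod_cast h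
      have hdq : q j ∣ (q j - 1) * p i * q j' := ⟨p i', by linarith [hN]⟩
      rcases (Nat.Prime.dvd_mul (hq j)).mp hdq with hd | hd
      · rcases (Nat.Prime.dvd_mul (hq j)).mp hd with hd' | hd'
        · exact absurd hd' (hqm1 j)
        · exact absurd hd' (hqp j i)
      · have hj : j = j' := hqq j j' hd
        subst hj
        have hN' : p i' = (q j - 1) * p i := by
          have := (hq j).pos
          exact (Nat.eq_of_mul_eq_mul_right this hN).symm
        exact absurd hN' (hmix i' i j)
    · -- true, true
      rw [hcast j, hcast j', div_eq_div_iff (hq0 j) (hq0 j')] at h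
      have hN : (q j - 1) * p i * q j' = (q j' - 1) * p i' * q j := by exact_mod_cast h
      have hdq : q j ∣ (q j - 1) * p i * q j' := ⟨(q j' - 1) * p i', by linarith [hN]⟩
      rcases (Nat.Prime.dvd_mul (hq j)).mp hdq with hd | hd
      · rcases (Nat.Prime.dvd_mul (hq j)).mp hd with hd' | hd'
        · exact absurd hd' (hqm1 j)
        · exact absurd hd' (hqp j i)
      · have hj : j = j' := hqq j j' hd
        subst hj
        have hN' : (q j - 1) * p i = (q j - 1) * p i' := by
          have := (hq j).pos
          exact Nat.eq_of_mul_eq_mul_right this hN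
        have : p i = p i' := by
          have h2 : q j - 1 ≠ 0 := by have := hq3 j; omega
          exact Nat.eq_of_mul_eq_mul_left (Nat.pos_of_ne_zero h2) hN'
        have hi : i = i' := hpinj this
        subst hi; rfl
  have hsum : ∀ i j, (p i : ℚ) / q j + ((q j : ℚ) - 1) * p i / q j = p i := fun i j => by
    rw [show (p i : ℚ) / q j + ((q j : ℚ) - 1) * p i / q j = (p i * q j) / q j by ring,
      mul_div_cancel_right₀ _ (hq0 j)]
  have hrat : ∀ i j, (((q j : ℚ) - 1) * p i / q j) / ((p i : ℚ) / q j) = (q j : ℚ) - 1 :=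
    fun i j => by
      rw [show (((q j : ℚ) - 1) * p i / q j) / ((p i : ℚ) / q j)
          = ((q j : ℚ) - 1) * (((p i : ℚ) / q j) / ((p i : ℚ) / q j)) by ring,
        div_self (div_ne_zero (hp0 i) (hq0 j)), mul_one]
  have hsumset : {s : ℚ | ∃ i j : Fin k, s = (p i : ℚ) / q j + ((q j : ℚ) - 1) * p i / q j} =
      {s : ℚ | ∃ i : Fin k, s = (p i : ℚ)} := by
    ext s
    simp only [Set.mem_setOf_eq]
    constructor
    · rintro ⟨i, j, rfl⟩; exact ⟨i, hsum i j⟩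
    · rintro ⟨i, rfl⟩; exact ⟨i, ⟨0, hk⟩, (hsum i ⟨0, hk⟩).symm⟩
  have hratset : {r : ℚ | ∃ i j : Fin k, r = (((q j : ℚ) - 1) * p i / q j) / ((p i : ℚ) / q j)} =
      {r : ℚ | ∃ j : Fin k, r = (q j : ℚ) - 1} := by
    ext r
    simp only [Set.mem_setOf_eq]
    constructor
    · rintro ⟨i, j, rfl⟩; exact ⟨j, hrat i j⟩
    · rintro ⟨j, rfl⟩; exact ⟨⟨0, hk⟩, j, (hrat ⟨0, hk⟩ j).symm⟩
  have hrange1 : {s : ℚ | ∃ i : Fin k, s = (p i : ℚ)} = Set.range (fun i : Fin k => (p i : ℚ)) := by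
    ext s; simp [eq_comm]
  have hrange2 : {r : ℚ | ∃ j : Fin k, r = (q j : ℚ) - 1} =
      Set.range (fun j : Fin k => (q j : ℚ) - 1) := by
    ext r; simp [eq_comm]
  have hinj1 : Function.Injective (fun i : Fin k => (p i : ℚ)) := fun a b hab =>
    hpinj (Nat.cast_injective hab)
  have hinj2 : Function.Injective (fun j : Fin k => (q j : ℚ) - 1) := fun a b hab => by
    have : (q a : ℚ) = q b := by
      have : (q a : ℚ) - 1 = (q b : ℚ) - 1 := hab
      linarith
    exact hqinj (Nat.cast_injective this)
  refine ⟨hsumset, ?_, hratset, ?_⟩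
  · rw [hsumset, hrange1, ← Nat.card_coe_set_eq, Nat.card_range_of_injective hinj1]
    simp
  · rw [hratset, hrange2, ← Nat.card_coe_set_eq, Nat.card_range_of_injective hinj2]
    simp
end

section
/- Let A be an n-element set of real numbers and G a graph on vertex set A with m edges. Then |A +_G A| + |A ·_G A| = Ω(m^{3/2} / n^{7/4}); precisely, there is an absolute constant c > 0 such that |A +_G A| + |A ·_G A| ≥ c · m^{3/2} / n^{7/4}. -/
/-!
Write `N = |A +_G A| + |A ·_G A|`. Every cherry `w₁ ← u → w₂` of `G` gives an incidence between
the point `(u + w₁, u · w₂)` of the grid `(A +_G A) × (A ·_G A)` and the line `y = (x - w₁) · w₂`,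
and these are essentially distinct; by Cauchy–Schwarz there are at least `(2m)² / n` cherries,
while there are at most `n²` lines. Cutting the grid into `r × r` cells, each holding at most
`(N / r)²` points, and noting that a line meets at most `2r` cells, the Cauchy–Schwarz bound
`I ≤ L + √L · P` in every cell gives `I ≲ r L + N² √(L / r)`. With `r ≈ m² / n³` this yields
`m⁶ ≲ N⁴ n⁷`. When `m² < 2 n³` the bound follows instead from `m ≤ |A +_G A| · |A ·_G A|`,
as the sum and the product of two numbers determine them.
-/

open Finset

noncomputable section

/-- The pair `ℓ = (k, b)` stands for the line `y = k * x + b`. -/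
def IsOn (p ℓ : ℝ × ℝ) : Prop := p.2 = ℓ.1 * p.1 + ℓ.2

instance : DecidableRel IsOn := fun _ _ => inferInstanceAs (Decidable (_ = _))

def incidences (P L : Finset (ℝ × ℝ)) : Finset ((ℝ × ℝ) × (ℝ × ℝ)) :=
  (P ×ˢ L).filter fun x => IsOn x.1 x.2

theorem IsOn.eq_of_ne {p q ℓ ℓ' : ℝ × ℝ} (hpq : p ≠ q) (hp : IsOn p ℓ) (hq : IsOn q ℓ)
    (hp' : IsOn p ℓ') (hq' : IsOn q ℓ') : ℓ = ℓ' := by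
  unfold IsOn at *
  have hx : p.1 - q.1 ≠ 0 := fun h => hpq (Prod.ext (sub_eq_zero.mp h) (by
    rw [hp, hq, sub_eq_zero.mp h]))
  have hk : ℓ.1 = ℓ'.1 := by
    have : (ℓ.1 - ℓ'.1) * (p.1 - q.1) = 0 := by linear_combination hq - hp + hp' - hq'
    exact sub_eq_zero.mp ((mul_eq_zero.mp this).resolve_right hx)
  exact Prod.ext hk (by rw [hk] at hp; linarith)

theorem card_incidences (P L : Finset (ℝ × ℝ)) :
    #(incidences P L) = ∑ ℓ ∈ L, #(P.filter (IsOn · ℓ)) := by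
  simp only [incidences, card_filter, sum_product_right]

theorem sum_card_offDiag_le (P L : Finset (ℝ × ℝ)) :
    ∑ ℓ ∈ L, #(P.filter (IsOn · ℓ)).offDiag ≤ #P.offDiag := by
  rw [← card_sigma]
  refine card_le_card_of_injOn Sigma.snd (fun x hx => ?_) ?_
  · simp only [coe_sigma, Set.mem_sigma_iff, mem_coe] at hx
    exact offDiag_mono (filter_subset _ _) hx.2
  · rintro ⟨ℓ, p, q⟩ hx ⟨ℓ', p', q'⟩ hx' hpq
    obtain ⟨rfl, rfl⟩ := Prod.mk.inj hpq
    simp only [coe_sigma, Set.mem_sigma_iff, mem_coe, mem_offDiag, mem_filter] at hx hx'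
    obtain rfl := IsOn.eq_of_ne hx.2.2.2 hx.2.1.2 hx.2.2.1.2 hx'.2.1.2 hx'.2.2.1.2
    rfl

theorem card_incidences_le (P L : Finset (ℝ × ℝ)) :
    (#(incidences P L) : ℝ) ≤ #L + √(#L : ℝ) * #P := by
  have hsq : ∀ ℓ, #(P.filter (IsOn · ℓ)) * #(P.filter (IsOn · ℓ)) =
      #(P.filter (IsOn · ℓ)).offDiag + #(P.filter (IsOn · ℓ)) := fun ℓ => by
    rw [offDiag_card]; have := Nat.le_mul_self #(P.filter (IsOn · ℓ)); omega
  have hsum : ∑ ℓ ∈ L, (#(P.filter (IsOn · ℓ)) : ℝ) ^ 2 ≤ #P ^ 2 + #(incidences P L) := by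
    have h := sum_card_offDiag_le P L
    rw [offDiag_card] at h
    have hP := Nat.le_mul_self #P
    simp only [sq, ← Nat.cast_mul, ← Nat.cast_sum, ← Nat.cast_add, Nat.cast_le, card_incidences]
    rw [sum_congr rfl fun ℓ _ => hsq ℓ, sum_add_distrib]
    omega
  have hCS : (#(incidences P L) : ℝ) ^ 2 ≤ #L * (#(incidences P L) + #P ^ 2) := by
    have h := sq_sum_le_card_mul_sum_sq (s := L) (f := fun ℓ => (#(P.filter (IsOn · ℓ)) : ℝ))
    simp only [← Nat.cast_sum, ← card_incidences] at h
    linarith [mul_le_mul_of_nonneg_left hsum (Nat.cast_nonneg (α := ℝ) #L)]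
  have hK := Real.sq_sqrt (Nat.cast_nonneg (α := ℝ) #L)
  nlinarith [Real.sqrt_nonneg #L, mul_nonneg (Real.sqrt_nonneg #L) (Nat.cast_nonneg (α := ℝ) #P),
    Nat.cast_nonneg (α := ℝ) #(incidences P L)]

def rankBlock (X : Finset ℝ) (s : ℕ) (v : ℝ) : ℕ := #(X.filter (· < v)) / s

theorem rankBlock_mono (X : Finset ℝ) (s : ℕ) : Monotone (rankBlock X s) := fun _ _ h =>
  Nat.div_le_div_right (card_le_card (monotone_filter_right _ fun _ _ hx => hx.trans_le h))

theorem rankBlock_lt {X : Finset ℝ} {s r : ℕ} (hs : 0 < s) (hX : #X ≤ s * r) {v : ℝ}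
    (hv : v ∈ X) : rankBlock X s v < r := by
  have : #(X.filter (· < v)) < #X := card_lt_card (filter_ssubset.mpr ⟨v, hv, lt_irrefl v⟩)
  exact (Nat.div_lt_iff_lt_mul hs).mpr (by rw [mul_comm]; omega)

theorem strictMonoOn_card_filter_lt (X : Finset ℝ) :
    StrictMonoOn (fun v => #(X.filter (· < v))) X := fun v hv _ _ h =>
  card_lt_card ⟨monotone_filter_right _ fun _ _ hx => lt_trans hx h,
    fun hsub => lt_irrefl v (mem_filter.mp (hsub (mem_filter.mpr ⟨hv, h⟩))).2⟩

theorem card_filter_rankBlock_eq_le (X : Finset ℝ) {s : ℕ} (hs : 0 < s) (i : ℕ) :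
    #(X.filter (rankBlock X s · = i)) ≤ s := by
  have h := card_le_card_of_injOn (fun v => #(X.filter (· < v)))
    (s := X.filter (rankBlock X s · = i)) (t := Ico (i * s) (i * s + s)) (fun v hv => by
      have hi : #(X.filter (· < v)) / s = i := (mem_filter.mp hv).2
      have h := Nat.div_add_mod #(X.filter (· < v)) s
      have := Nat.mod_lt #(X.filter (· < v)) hs
      rw [hi, mul_comm] at h
      simp only [coe_Ico, Set.mem_Ico]
      omega)
    ((strictMonoOn_card_filter_lt X).injOn.mono (coe_subset.mpr (filter_subset _ _)))
  simpa using h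

theorem card_le_of_monotone_chain {r : ℕ} {C : Finset (ℕ × ℕ)} (hC : C ⊆ range r ×ˢ range r)
    (hchain : ∀ c ∈ C, ∀ c' ∈ C, c.1 < c'.1 → c.2 ≤ c'.2) : #C ≤ 2 * r := by
  have h := card_le_card_of_injOn (fun c : ℕ × ℕ => c.1 + c.2) (t := range (2 * r))
    (fun c hc => by have := mem_product.mp (hC hc); simp at this ⊢; omega)
    (fun c hc c' hc' (h : c.1 + c.2 = c'.1 + c'.2) => by
      have := hchain c hc c' hc'; have := hchain c' hc' c hc
      ext <;> omega)
  simpa using h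

theorem card_le_of_antitone_chain {r : ℕ} {C : Finset (ℕ × ℕ)} (hC : C ⊆ range r ×ˢ range r)
    (hchain : ∀ c ∈ C, ∀ c' ∈ C, c.1 < c'.1 → c'.2 ≤ c.2) : #C ≤ 2 * r := by
  have h := card_le_card_of_injOn (fun c : ℕ × ℕ => c.1 + (r - c.2)) (t := range (2 * r))
    (fun c hc => by have := mem_product.mp (hC hc); simp at this ⊢; omega)
    (fun c hc c' hc' (h : c.1 + (r - c.2) = c'.1 + (r - c'.2)) => by
      have := mem_product.mp (hC hc); have := mem_product.mp (hC hc')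
      simp only [mem_range] at *
      have := hchain c hc c' hc'; have := hchain c' hc' c hc
      ext <;> omega)
  simpa using h

section Grid

variable (X Y : Finset ℝ) (s t : ℕ)

def cell (p : ℝ × ℝ) : ℕ × ℕ := (rankBlock X s p.1, rankBlock Y t p.2)

def linesThroughCell (L : Finset (ℝ × ℝ)) (c : ℕ × ℕ) : Finset (ℝ × ℝ) :=
  L.filter fun ℓ => ∃ p ∈ X ×ˢ Y, cell X Y s t p = c ∧ IsOn p ℓ

variable {X Y s t}

theorem cell_mem_range {r : ℕ} (hs : 0 < s) (ht : 0 < t) (hX : #X ≤ s * r) (hY : #Y ≤ t * r)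
    {p : ℝ × ℝ} (hp : p ∈ X ×ˢ Y) : cell X Y s t p ∈ range r ×ˢ range r := by
  rw [mem_product] at hp
  exact mem_product.mpr ⟨mem_range.mpr (rankBlock_lt hs hX hp.1),
    mem_range.mpr (rankBlock_lt ht hY hp.2)⟩

/-- A line passes through the cells monotonically. -/
theorem card_image_cell_le {r : ℕ} (hs : 0 < s) (ht : 0 < t) (hX : #X ≤ s * r)
    (hY : #Y ≤ t * r) (ℓ : ℝ × ℝ) :
    #(((X ×ˢ Y).filter (IsOn · ℓ)).image (cell X Y s t)) ≤ 2 * r := by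
  have hC : ((X ×ˢ Y).filter (IsOn · ℓ)).image (cell X Y s t) ⊆ range r ×ˢ range r :=
    image_subset_iff.mpr fun p hp => cell_mem_range hs ht hX hY (mem_filter.mp hp).1
  have hx : ∀ p q : ℝ × ℝ, (cell X Y s t p).1 < (cell X Y s t q).1 → p.1 < q.1 :=
    fun p q h => (rankBlock_mono X s).reflect_lt h
  rcases le_total 0 ℓ.1 with hk | hk
  · refine card_le_of_monotone_chain hC ?_
    simp only [mem_image, mem_filter, forall_exists_index, and_imp]
    rintro _ p - hp rfl _ q - hq rfl h
    exact rankBlock_mono Y t (by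
      rw [hp, hq]; nlinarith [hx p q h])
  · refine card_le_of_antitone_chain hC ?_
    simp only [mem_image, mem_filter, forall_exists_index, and_imp]
    rintro _ p - hp rfl _ q - hq rfl h
    exact rankBlock_mono Y t (by
      unfold IsOn at hp hq; rw [hp, hq]; nlinarith [hx p q h])

theorem card_incidences_eq_sum_cells {r : ℕ} (hs : 0 < s) (ht : 0 < t) (hX : #X ≤ s * r)
    (hY : #Y ≤ t * r) (L : Finset (ℝ × ℝ)) :
    #(incidences (X ×ˢ Y) L) = ∑ c ∈ range r ×ˢ range r,
      #(incidences ((X ×ˢ Y).filter (cell X Y s t · = c)) (linesThroughCell X Y s t L c)) := by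
  rw [card_eq_sum_card_fiberwise (s := incidences (X ×ˢ Y) L) (f := fun x => cell X Y s t x.1)
    fun x hx => cell_mem_range hs ht hX hY (mem_product.mp (mem_filter.mp hx).1).1]
  refine sum_congr rfl fun c _ => congrArg card (ext fun ⟨p, ℓ⟩ => ?_)
  simp only [incidences, linesThroughCell, mem_filter, mem_product]
  constructor
  · rintro ⟨⟨⟨hp, hℓ⟩, hpℓ⟩, rfl⟩
    exact ⟨⟨⟨hp, rfl⟩, hℓ, p, hp, rfl, hpℓ⟩, hpℓ⟩
  · rintro ⟨⟨⟨hp, rfl⟩, hℓ, -⟩, hpℓ⟩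
    exact ⟨⟨⟨hp, hℓ⟩, hpℓ⟩, rfl⟩

theorem sum_card_linesThroughCell_le {r : ℕ} (hs : 0 < s) (ht : 0 < t) (hX : #X ≤ s * r)
    (hY : #Y ≤ t * r) (L : Finset (ℝ × ℝ)) :
    ∑ c ∈ range r ×ˢ range r, #(linesThroughCell X Y s t L c) ≤ 2 * r * #L := by
  have h := sum_card_bipartiteAbove_eq_sum_card_bipartiteBelow (s := range r ×ˢ range r) (t := L)
    (r := fun c ℓ => ∃ p ∈ X ×ˢ Y, cell X Y s t p = c ∧ IsOn p ℓ)
  simp only [bipartiteAbove, bipartiteBelow] at h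
  unfold linesThroughCell
  rw [h, mul_comm, ← smul_eq_mul]
  refine sum_le_card_nsmul _ _ _ fun ℓ _ => le_trans (card_le_card fun c hc => ?_)
    (card_image_cell_le hs ht hX hY ℓ)
  obtain ⟨p, hp, rfl, hpℓ⟩ := (mem_filter.mp hc).2
  exact mem_image_of_mem _ (mem_filter.mpr ⟨hp, hpℓ⟩)

theorem card_cell_fiber_le (hs : 0 < s) (ht : 0 < t) (c : ℕ × ℕ) :
    #((X ×ˢ Y).filter (cell X Y s t · = c)) ≤ s * t := by
  calc #((X ×ˢ Y).filter (cell X Y s t · = c))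
      ≤ #((X.filter (rankBlock X s · = c.1)) ×ˢ (Y.filter (rankBlock Y t · = c.2))) :=
        card_le_card fun p hp => by
          simp only [mem_filter, mem_product, cell, Prod.ext_iff] at hp ⊢
          tauto
    _ ≤ s * t := by
      rw [card_product]
      exact Nat.mul_le_mul (card_filter_rankBlock_eq_le X hs _) (card_filter_rankBlock_eq_le Y ht _)

end Grid

/-- Szemerédi–Trotter for grids, in the weak form given by cutting `X × Y` into `r²` cells. -/
theorem card_incidences_product_le (X Y : Finset ℝ) (L : Finset (ℝ × ℝ)) {r s t : ℕ}
    (hs : 0 < s) (ht : 0 < t) (hX : #X ≤ s * r) (hY : #Y ≤ t * r) :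
    (#(incidences (X ×ˢ Y) L) : ℝ) ≤ 2 * r * #L + s * t * r * √(2 * r * #L) := by
  set Lc := linesThroughCell X Y s t L
  have hlines : ∑ c ∈ range r ×ˢ range r, (#(Lc c) : ℝ) ≤ 2 * r * #L := by
    exact_mod_cast sum_card_linesThroughCell_le hs ht hX hY L
  have hroots : ∑ c ∈ range r ×ˢ range r, √(#(Lc c) : ℝ) ≤ r * √(2 * r * #L) := by
    have h := Real.sum_sqrt_mul_sqrt_le (range r ×ˢ range r) (f := fun c => (#(Lc c) : ℝ))
      (g := fun _ => 1) (fun _ => by positivity) (fun _ => zero_le_one)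
    simp only [Real.sqrt_one, mul_one, sum_const, card_product, card_range, nsmul_one,
      Nat.cast_mul, Real.sqrt_mul_self (Nat.cast_nonneg r)] at h
    nlinarith [Real.sqrt_le_sqrt hlines, Nat.cast_nonneg (α := ℝ) r]
  rw [card_incidences_eq_sum_cells hs ht hX hY L]
  push_cast
  calc ∑ c ∈ range r ×ˢ range r, (#(incidences ((X ×ˢ Y).filter (cell X Y s t · = c)) (Lc c)) : ℝ)
      ≤ ∑ c ∈ range r ×ˢ range r, ((#(Lc c) : ℝ) + √(#(Lc c) : ℝ) * (s * t)) := by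
        refine sum_le_sum fun c _ => (card_incidences_le _ _).trans ?_
        gcongr
        exact_mod_cast card_cell_fiber_le hs ht c
    _ ≤ 2 * r * #L + s * t * r * √(2 * r * #L) := by
        rw [sum_add_distrib, ← sum_mul]
        have := mul_le_mul_of_nonneg_right hroots (by positivity : (0 : ℝ) ≤ s * t)
        linarith

theorem pow_six_le_of_incidence_bounds {m n N r σ K I : ℝ} (hn : 1 ≤ n) (hm : 0 ≤ m)
    (hr : 1 ≤ r) (hσ : 0 ≤ σ) (hK : 0 ≤ K) (hKn : K ≤ n ^ 2) (hrm : 2 * n ^ 3 * r ≤ m ^ 2)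
    (hmr : m ^ 2 ≤ 4 * n ^ 3 * r) (hσr : σ * r ≤ 2 * N) (hlow : (2 * m) ^ 2 ≤ n * (I + 2 * m))
    (hup : I ≤ 2 * r * K + σ * σ * r * √(2 * r * K)) : m ^ 6 ≤ 128 * N ^ 4 * n ^ 7 := by
  have hn3 : n ^ 2 ≤ n ^ 3 := pow_le_pow_right₀ hn (by norm_num)
  have hnm : n ≤ m := by
    refine (pow_le_pow_iff_left₀ (by linarith) hm two_ne_zero).mp ?_
    nlinarith
  have hnI : 2 * m ^ 2 ≤ n * I := by nlinarith
  have hroot : m ^ 2 ≤ n * (σ * σ * r * √(2 * r * K)) := by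
    have : n * (2 * r * K) ≤ m ^ 2 := by
      nlinarith [mul_le_mul_of_nonneg_left hKn (by positivity : 0 ≤ 2 * r * n)]
    nlinarith [mul_le_mul_of_nonneg_left hup (by positivity : 0 ≤ n)]
  have hsq : m ^ 4 * r ≤ 32 * n ^ 4 * N ^ 4 := by
    have h1 : m ^ 4 ≤ n ^ 2 * (σ * σ * r) ^ 2 * (2 * r * K) := by
      have := pow_le_pow_left₀ (by positivity) hroot 2
      rw [mul_pow, mul_pow, Real.sq_sqrt (by positivity)] at this
      calc m ^ 4 = (m ^ 2) ^ 2 := by ring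
        _ ≤ _ := this
        _ = _ := by ring
    have h2 : (σ * r) ^ 4 ≤ (2 * N) ^ 4 := pow_le_pow_left₀ (by positivity) hσr 4
    calc m ^ 4 * r ≤ n ^ 2 * (σ * σ * r) ^ 2 * (2 * r * K) * r := by gcongr
      _ = 2 * n ^ 2 * K * (σ * r) ^ 4 := by ring
      _ ≤ 2 * n ^ 2 * n ^ 2 * (2 * N) ^ 4 := by gcongr
      _ = 32 * n ^ 4 * N ^ 4 := by ring
  calc m ^ 6 = m ^ 4 * m ^ 2 := by ring
    _ ≤ m ^ 4 * (4 * n ^ 3 * r) := by gcongr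
    _ = 4 * n ^ 3 * (m ^ 4 * r) := by ring
    _ ≤ 4 * n ^ 3 * (32 * n ^ 4 * N ^ 4) := by gcongr
    _ = 128 * N ^ 4 * n ^ 7 := by ring

theorem pow_six_le_of_sq_lt {m n N : ℕ} (hmN : 4 * m ≤ N ^ 2) (h : m ^ 2 < 2 * n ^ 3) :
    m ^ 6 ≤ 128 * N ^ 4 * n ^ 7 := by
  have hn : 1 ≤ n := by rcases n with _ | n <;> simp_all
  calc m ^ 6 ≤ 16 * m ^ 6 := by omega
    _ = (m ^ 2) ^ 2 * (4 * m) ^ 2 := by ring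
    _ ≤ (2 * n ^ 3) ^ 2 * (N ^ 2) ^ 2 := by gcongr
    _ = 4 * N ^ 4 * n ^ 6 := by ring
    _ ≤ 128 * N ^ 4 * n ^ 7 := by gcongr <;> omega

theorem exists_pos_mul_le_and_le_two_mul {a b : ℕ} (hb : 0 < b) (h : b ≤ a) :
    ∃ r, 0 < r ∧ b * r ≤ a ∧ a ≤ 2 * (b * r) := by
  refine ⟨a / b, Nat.div_pos h hb, Nat.mul_div_le a b, ?_⟩
  have := Nat.lt_mul_div_succ a hb
  have := Nat.mul_le_mul_left b (Nat.div_pos h hb)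
  rw [mul_add] at *
  omega

theorem exists_pos_le_mul_and_mul_le_two_mul {a b : ℕ} (hb : 0 < b) (h : b ≤ a) :
    ∃ q, 0 < q ∧ a ≤ q * b ∧ q * b ≤ 2 * a := by
  refine ⟨a / b + 1, Nat.succ_pos _, ?_, ?_⟩ <;> rw [add_mul, one_mul]
  · exact (Nat.lt_div_mul_add hb).le
  · have := Nat.div_mul_le_self a b
    omega

theorem le_of_pow_six_le {m n N : ℝ} (hm : 0 ≤ m) (hn : 0 ≤ n) (hN : 0 ≤ N)
    (h : m ^ 6 ≤ 128 * N ^ 4 * n ^ 7) : 1 / 4 * m ^ ((3 : ℝ) / 2) / n ^ ((7 : ℝ) / 4) ≤ N := by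
  rcases hn.eq_or_lt with rfl | hn
  · rw [Real.zero_rpow (by norm_num), div_zero]
    exact hN
  have hm4 : (m ^ ((3 : ℝ) / 2)) ^ 4 = m ^ 6 := by
    rw [← Real.rpow_natCast, ← Real.rpow_mul hm]; norm_num
  have hn4 : (n ^ ((7 : ℝ) / 4)) ^ 4 = n ^ 7 := by
    rw [← Real.rpow_natCast, ← Real.rpow_mul hn.le]; norm_num
  refine (pow_le_pow_iff_left₀ (by positivity) hN four_ne_zero).mp ?_
  rw [div_pow, mul_pow, hm4, hn4, div_le_iff₀ (by positivity)]
  nlinarith [pow_pos hn 7, pow_nonneg hN 4]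

theorem Sym2.eq_of_add_eq_add_of_mul_eq_mul {R : Type*} [CommRing R] [IsDomain R] {x y z w : R}
    (hs : x + y = z + w) (hp : x * y = z * w) : s(x, y) = s(z, w) := by
  have h : (x - z) * (x - w) = 0 := by linear_combination x * hs - hp
  rcases mul_eq_zero.mp h with h | h
  · exact Sym2.eq_iff.mpr (Or.inl ⟨sub_eq_zero.mp h, by linear_combination hs - h⟩)
  · exact Sym2.eq_iff.mpr (Or.inr ⟨sub_eq_zero.mp h, by linear_combination hs - h⟩)

section Graph

variable {V : Type*} [Fintype V] (G : SimpleGraph V) [DecidableRel G.Adj]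

/-- `{f u v | u ~ v}`, which is `A +_G A` for `f u v = a u + a v` and `A ·_G A` for
`f u v = a u * a v`. -/
def adjImage (f : V → V → ℝ) : Finset ℝ := univ.image fun d : G.Dart => f d.fst d.snd

theorem coe_adjImage (f : V → V → ℝ) :
    (adjImage G f : Set ℝ) = {x | ∃ i j, G.Adj i j ∧ x = f i j} := by
  ext x
  simp only [adjImage, coe_image, coe_univ, Set.image_univ, Set.mem_range, Set.mem_ofPred_eq]
  constructor
  · rintro ⟨d, rfl⟩
    exact ⟨d.fst, d.snd, d.adj, rfl⟩
  · rintro ⟨i, j, h, rfl⟩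
    exact ⟨⟨(i, j), h⟩, rfl⟩

theorem mem_adjImage {f : V → V → ℝ} {i j : V} (h : G.Adj i j) : f i j ∈ adjImage G f :=
  mem_image_of_mem _ (mem_univ (⟨(i, j), h⟩ : G.Dart))

/-- An edge is determined by the sum and the product of the values at its ends. -/
theorem card_edgeFinset_le_card_mul_card {a : V → ℝ} (ha : Function.Injective a) :
    #G.edgeFinset ≤ #(adjImage G (a · + a ·)) * #(adjImage G (a · * a ·)) := by
  rw [← card_product]
  let f : Sym2 V → ℝ × ℝ :=
    Sym2.lift ⟨fun u v => (a u + a v, a u * a v), fun u v => by simp only [add_comm, mul_comm]⟩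
  refine card_le_card_of_injOn f (fun e he => ?_) (fun e he e' he' hee' => ?_)
  · induction e using Sym2.ind with
    | h u v => exact mem_product.mpr ⟨mem_adjImage G (SimpleGraph.mem_edgeFinset.mp he),
        mem_adjImage G (SimpleGraph.mem_edgeFinset.mp he)⟩
  · induction e using Sym2.ind
    induction e' using Sym2.ind
    obtain ⟨hs, hp⟩ := Prod.mk.inj hee'
    exact Sym2.map.injective ha (Sym2.eq_of_add_eq_add_of_mul_eq_mul hs hp)

theorem card_edgeFinset_le_sq : #G.edgeFinset ≤ Fintype.card V ^ 2 :=
  G.card_edgeFinset_le_card_choose_two.trans (Nat.choose_le_pow _ 2)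

theorem four_mul_card_edgeFinset_le {a : V → ℝ} (ha : Function.Injective a) :
    4 * #G.edgeFinset ≤ (#(adjImage G (a · + a ·)) + #(adjImage G (a · * a ·))) ^ 2 :=
  calc 4 * #G.edgeFinset ≤ 4 * #(adjImage G (a · + a ·)) * #(adjImage G (a · * a ·)) := by
        rw [mul_assoc]; exact Nat.mul_le_mul_left 4 (card_edgeFinset_le_card_mul_card G ha)
    _ ≤ _ := four_mul_le_sq_add _ _

/-- The lines `y = (x - a i) * a j`. -/
def elekesLines (a : V → ℝ) : Finset (ℝ × ℝ) :=
  univ.image fun q : V × V => (a q.2, -(a q.1 * a q.2))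

theorem card_elekesLines_le (a : V → ℝ) : #(elekesLines a) ≤ Fintype.card V ^ 2 := by
  rw [sq, ← Fintype.card_prod]
  exact card_image_le

variable [DecidableEq V]

/-- Ordered pairs of (not necessarily distinct) darts leaving a common vertex. -/
def cherries : Finset (G.Dart × G.Dart) := univ.filter fun d => d.1.fst = d.2.fst

theorem card_cherries : #(cherries G) = ∑ v, G.degree v ^ 2 := by
  rw [card_eq_sum_card_fiberwise (f := fun d => d.1.fst) (t := univ) fun _ _ => mem_univ _]
  refine sum_congr rfl fun v _ => ?_
  rw [sq, ← G.dart_fst_fiber_card_eq_degree, ← card_product]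
  congr 1
  ext ⟨d, d'⟩
  simp only [cherries, mem_filter, mem_univ, true_and, mem_product]
  constructor
  · rintro ⟨h, rfl⟩
    exact ⟨rfl, h.symm⟩
  · rintro ⟨rfl, h⟩
    exact ⟨h.symm, rfl⟩

theorem sq_card_edgeFinset_le :
    (2 * #G.edgeFinset) ^ 2 ≤ Fintype.card V * #(cherries G) := by
  rw [card_cherries, ← G.sum_degrees_eq_twice_card_edges, ← card_univ]
  exact sq_sum_le_card_mul_sum_sq

/-- The cherry `w₁ ← u → w₂` gives the point `(a u + a w₁, a u * a w₂)` on the line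
`y = (x - a w₁) * a w₂`; the line and the point determine the cherry unless `a w₂ = 0`. -/
theorem card_cherries_le {a : V → ℝ} (ha : Function.Injective a) :
    #(cherries G) ≤
      #(incidences (adjImage G (a · + a ·) ×ˢ adjImage G (a · * a ·)) (elekesLines a)) +
        2 * #G.edgeFinset := by
  rw [← card_filter_add_card_filter_not (p := fun d : G.Dart × G.Dart => a d.2.snd ≠ 0)]
  gcongr
  · refine card_le_card_of_injOn (fun d => ((a d.1.fst + a d.1.snd, a d.1.fst * a d.2.snd),
      (a d.2.snd, -(a d.1.snd * a d.2.snd)))) (fun d hd => ?_) (fun d hd d' hd' h => ?_)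
    · simp only [cherries, mem_coe, mem_filter, mem_univ, true_and] at hd
      rw [mem_coe, incidences, mem_filter, mem_product, mem_product]
      refine ⟨⟨⟨mem_adjImage G d.1.adj, ?_⟩, mem_image_of_mem _ (mem_univ (d.1.snd, d.2.snd))⟩,
        show _ = _ by ring⟩
      show a d.1.fst * a d.2.snd ∈ _
      rw [hd.1]
      exact mem_adjImage G d.2.adj
    · simp only [cherries, mem_coe, mem_filter, mem_univ, true_and] at hd hd'
      simp only [Prod.mk.injEq] at h
      obtain ⟨⟨hsum, hprod⟩, hk, hb⟩ := h
      have h22 := ha hk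
      have h12 : d.1.snd = d'.1.snd := ha (mul_right_cancel₀ hd.2 (by rw [hk] at hb ⊢; linarith))
      have h11 : d.1.fst = d'.1.fst := ha (by rw [h12] at hsum; linarith)
      ext <;> simp_all
  · rw [← G.dart_card_eq_twice_card_edges, ← card_univ]
    refine card_le_card_of_injOn Prod.fst (fun _ _ => mem_coe.mpr (mem_univ _))
      fun d hd d' hd' h => ?_
    simp only [cherries, mem_coe, mem_filter, mem_univ, true_and, not_not] at hd hd'
    ext <;> simp_all [ha (hd.2.trans hd'.2.symm)]

theorem card_edgeFinset_pow_six_le_of_le_sq {a : V → ℝ} (ha : Function.Injective a)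
    (h : 2 * Fintype.card V ^ 3 ≤ #G.edgeFinset ^ 2) :
    #G.edgeFinset ^ 6 ≤
      128 * (#(adjImage G (a · + a ·)) + #(adjImage G (a · * a ·))) ^ 4 * Fintype.card V ^ 7 := by
  set S := adjImage G (a · + a ·)
  set P := adjImage G (a · * a ·)
  set m := #G.edgeFinset
  set n := Fintype.card V
  have hmn : m ≤ n ^ 2 := card_edgeFinset_le_sq G
  rcases Nat.eq_zero_or_pos n with hn | hn
  · simp [show m = 0 by simpa [hn] using hmn]
  -- `r ≈ m² / n³` balances the two terms of `card_incidences_product_le`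
  obtain ⟨r, hr, hrm, hmr⟩ := exists_pos_mul_le_and_le_two_mul (by positivity : 0 < 2 * n ^ 3) h
  have hrN : r ≤ #S + #P := by
    have h4r : 4 * r ^ 2 ≤ m := by
      have hm3 : m ^ 3 ≤ n ^ 6 := by simpa [← pow_mul] using Nat.pow_le_pow_left hmn 3
      have : 4 * r ^ 2 * n ^ 6 ≤ m * n ^ 6 := by nlinarith
      exact Nat.le_of_mul_le_mul_right this (by positivity)
    nlinarith [four_mul_card_edgeFinset_le G ha]
  obtain ⟨σ, hσ, hSP, hσr⟩ := exists_pos_le_mul_and_mul_le_two_mul hr hrN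
  have hup := card_incidences_product_le S P (elekesLines a) hσ hσ (by omega : #S ≤ σ * r)
    (by omega : #P ≤ σ * r)
  have hlow := (sq_card_edgeFinset_le G).trans (Nat.mul_le_mul_left n (card_cherries_le G ha))
  have hK := card_elekesLines_le (V := V) a
  exact_mod_cast pow_six_le_of_incidence_bounds (m := m) (n := n) (N := #S + #P) (r := r)
    (σ := σ) (K := #(elekesLines a)) (I := #(incidences (S ×ˢ P) (elekesLines a)))
    (by exact_mod_cast hn) (Nat.cast_nonneg _) (by exact_mod_cast hr) (Nat.cast_nonneg _)
    (Nat.cast_nonneg _) (by exact_mod_cast hK) (by exact_mod_cast hrm)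
    (by exact_mod_cast (by linarith : m ^ 2 ≤ 4 * n ^ 3 * r)) (by exact_mod_cast hσr)
    (by exact_mod_cast hlow) hup

theorem card_edgeFinset_pow_six_le {a : V → ℝ} (ha : Function.Injective a) :
    #G.edgeFinset ^ 6 ≤
      128 * (#(adjImage G (a · + a ·)) + #(adjImage G (a · * a ·))) ^ 4 * Fintype.card V ^ 7 := by
  rcases lt_or_ge (#G.edgeFinset ^ 2) (2 * Fintype.card V ^ 3) with h | h
  · exact pow_six_le_of_sq_lt (four_mul_card_edgeFinset_le G ha) h
  · exact card_edgeFinset_pow_six_le_of_le_sq G ha h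

end Graph

end

/-- Elekes-type lower bound: `|A +_G A| + |A ·_G A| ≥ c · m^{3/2} / n^{7/4}`
for an absolute constant `c > 0`. -/
theorem stmt_10 :
    ∃ c : ℝ, 0 < c ∧
      ∀ (n : ℕ) (a : Fin n → ℝ), Function.Injective a →
        ∀ (G : SimpleGraph (Fin n)) (_ : DecidableRel G.Adj) (m : ℕ),
          m = G.edgeFinset.card →
          c * (m : ℝ) ^ ((3 : ℝ) / 2) / (n : ℝ) ^ ((7 : ℝ) / 4) ≤
            ({x : ℝ | ∃ i j, G.Adj i j ∧ x = a i + a j}.ncard : ℝ) +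
            ({x : ℝ | ∃ i j, G.Adj i j ∧ x = a i * a j}.ncard : ℝ) := by
  refine ⟨1 / 4, by norm_num, fun n a ha G _ m hm => ?_⟩
  rw [← coe_adjImage G (a · + a ·), ← coe_adjImage G (a · * a ·), Set.ncard_coe_finset,
    Set.ncard_coe_finset, hm]
  have h := card_edgeFinset_pow_six_le G ha
  rw [Fintype.card_fin] at h
  exact le_of_pow_six_le (by positivity) (by positivity) (by positivity) (by exact_mod_cast h)
end

section
/- Suppose A is a set of n nonzero real numbers with |A + A| ≤ n^{2−α} and |A / A| ≤ n^{2−β} for reals α, β > 0, and suppose ζ is a real number such that the 2·n·|A·A| numbers a ± ζ·b·c (a, b, c ∈ A, b·c ∈ A·A) are pairwise distinct. Let B = {a + ζ·b·c : a ∈ A, bc ∈ A·A} ∪ {a − ζ·b·c : a ∈ A, bc ∈ A·A}, of cardinality N = 2·n·|A·A|, and let G be the graph on B in which a − ζ·a·c is joined to b + ζ·a·c for all a, b, c ∈ A. Then G has at least n^3 / 2 edges (counting each unordered pair once for distinct endpoints), the set of sums along the edges of G is contained in A + A and hence has at most n^{2−α} elements, and the set of ratios along the edges of G has at most 2·n·|A/A|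 ≤ 2·n^{3−β} elements. -/
open Pointwise

private lemma div_div_aux (x y a : ℝ) (ha : a ≠ 0) : (x/a)/(y/a) = x/y := by
  rcases eq_or_ne y 0 with rfl | hy
  · simp
  · field_simp

/-- From a set with small sumset and ratio set one builds a set `B` and a dense
graph on it with few sums and few ratios along the edges. -/
theorem stmt_14 (A : Set ℝ) (hfin : A.Finite) (h0 : (0 : ℝ) ∉ A)
    (n : ℕ) (hn : A.ncard = n) (hn1 : 1 ≤ n)
    (α β : ℝ) (hα : 0 < α) (hβ : 0 < β)
    (hsum : ((A + A).ncard : ℝ) ≤ (n : ℝ) ^ (2 - α))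
    (hdiv : ((A / A).ncard : ℝ) ≤ (n : ℝ) ^ (2 - β))
    (ζ : ℝ)
    (hζ : Function.Injective (fun x : A × ↥(A * A) × Bool =>
      (x.1 : ℝ) + (if x.2.2 then ζ else -ζ) * (x.2.1 : ℝ)))
    (B : Set ℝ)
    (hB : B = {x : ℝ | ∃ a ∈ A, ∃ s ∈ A * A, x = a + ζ * s ∨ x = a - ζ * s})
    (N : ℕ) (hN : N = 2 * n * (A * A).ncard)
    (E : ℝ → ℝ → Prop)
    (hE : ∀ x y : ℝ, E x y ↔ ∃ a ∈ A, ∃ b ∈ A, ∃ c ∈ A,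
      x = a - ζ * (a * c) ∧ y = b + ζ * (a * c)) :
    B.ncard = N ∧
    ((n : ℝ) ^ 3 / 2 ≤
      ({e : Sym2 ℝ | ∃ x y : ℝ, E x y ∧ x ≠ y ∧ e = s(x, y)}.ncard : ℝ)) ∧
    {s : ℝ | ∃ x y : ℝ, E x y ∧ s = x + y} ⊆ A + A ∧
    (({s : ℝ | ∃ x y : ℝ, E x y ∧ s = x + y}.ncard : ℝ) ≤ (n : ℝ) ^ (2 - α)) ∧
    (({r : ℝ | ∃ x y : ℝ, E x y ∧ (r = x / y ∨ r = y / x)}.ncard : ℝ) ≤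
        2 * n * (A / A).ncard) ∧
    (({r : ℝ | ∃ x y : ℝ, E x y ∧ (r = x / y ∨ r = y / x)}.ncard : ℝ) ≤
        2 * (n : ℝ) ^ (3 - β)) := by
  have hAA : (A * A).Finite := hfin.mul hfin
  have hAdA : (A / A).Finite := hfin.div hfin
  have hApA : (A + A).Finite := hfin.add hfin
  -- The basic injectivity consequence
  have key : ∀ a ∈ A, ∀ s ∈ A * A, ∀ a' ∈ A, ∀ s' ∈ A * A, ∀ t t' : Bool,
      a + (if t then ζ else -ζ) * s = a' + (if t' then ζ else -ζ) * s' →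
      a = a' ∧ s = s' ∧ t = t' := by
    intro a ha s hs a' ha' s' hs' t t' h
    have := hζ (a₁ := ⟨⟨a, ha⟩, ⟨s, hs⟩, t⟩) (a₂ := ⟨⟨a', ha'⟩, ⟨s', hs'⟩, t'⟩) h
    refine ⟨?_, ?_, ?_⟩
    · exact congrArg (fun p => (p.1 : ℝ)) this
    · exact congrArg (fun p => (p.2.1 : ℝ)) this
    · exact congrArg (fun p => p.2.2) this
  have hA0 : ∀ a ∈ A, a ≠ 0 := fun a ha h => h0 (h ▸ ha)
  -- Part 1 : B.ncard = N
  have part1 : B.ncard = N := by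
    have hBr : B = Set.range (fun x : A × ↥(A * A) × Bool =>
        (x.1 : ℝ) + (if x.2.2 then ζ else -ζ) * (x.2.1 : ℝ)) := by
      rw [hB]
      ext x
      simp only [Set.mem_setOf_eq, Set.mem_range]
      constructor
      · rintro ⟨a, ha, s, hs, h | h⟩
        · exact ⟨⟨⟨a, ha⟩, ⟨s, hs⟩, true⟩, by simp [h]⟩
        · exact ⟨⟨⟨a, ha⟩, ⟨s, hs⟩, false⟩, by simp [h, sub_eq_add_neg]⟩
      · rintro ⟨⟨⟨a, ha⟩, ⟨s, hs⟩, t⟩, h⟩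
        refine ⟨a, ha, s, hs, ?_⟩
        cases t
        · right; rw [← h]; simp [sub_eq_add_neg]
        · left; rw [← h]; simp
    rw [← Nat.card_coe_set_eq, hBr, Nat.card_range_of_injective hζ,
      Nat.card_prod, Nat.card_prod, Nat.card_coe_set_eq, Nat.card_coe_set_eq,
      Nat.card_eq_fintype_card, Fintype.card_bool, hn, hN]
    ring
  -- B is finite
  have hBfin : B.Finite := by
    rw [hB]
    have : {x : ℝ | ∃ a ∈ A, ∃ s ∈ A * A, x = a + ζ * s ∨ x = a - ζ * s} ⊆
        (fun p : ℝ × ℝ => p.1 + ζ * p.2) '' (A ×ˢ (A * A)) ∪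
        (fun p : ℝ × ℝ => p.1 - ζ * p.2) '' (A ×ˢ (A * A)) := by
      rintro x ⟨a, ha, s, hs, h | h⟩
      · exact Or.inl ⟨(a, s), ⟨ha, hs⟩, h.symm⟩
      · exact Or.inr ⟨(a, s), ⟨ha, hs⟩, h.symm⟩
    exact Set.Finite.subset (((hfin.prod hAA).image _).union ((hfin.prod hAA).image _)) this
  -- Edge endpoints in B
  have hmemB : ∀ x y, E x y → x ∈ B ∧ y ∈ B := by
    intro x y hxy
    rw [hE] at hxy
    obtain ⟨a, ha, b, hb, c, hc, hx, hy⟩ := hxy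
    have hac : a * c ∈ A * A := Set.mul_mem_mul ha hc
    constructor
    · rw [hB]; exact ⟨a, ha, a * c, hac, Or.inr hx⟩
    · rw [hB]; exact ⟨b, hb, a * c, hac, Or.inl hy⟩
  -- Part 2 : edge count
  have part2 : (n : ℝ) ^ 3 / 2 ≤
      ({e : Sym2 ℝ | ∃ x y : ℝ, E x y ∧ x ≠ y ∧ e = s(x, y)}.ncard : ℝ) := by
    set S := {e : Sym2 ℝ | ∃ x y : ℝ, E x y ∧ x ≠ y ∧ e = s(x, y)} with hS
    have hSfin : S.Finite := by
      have : S ⊆ (fun p : ℝ × ℝ => s(p.1, p.2)) '' (B ×ˢ B) := by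
        rintro e ⟨x, y, hxy, _, rfl⟩
        exact ⟨(x, y), ⟨(hmemB x y hxy).1, (hmemB x y hxy).2⟩, rfl⟩
      exact Set.Finite.subset ((hBfin.prod hBfin).image _) this
    set h : ℝ × ℝ × ℝ → Sym2 ℝ :=
      fun p => s(p.1 - ζ * (p.1 * p.2.2), p.2.1 + ζ * (p.1 * p.2.2)) with hh
    have hsub : h '' (A ×ˢ A ×ˢ A) ⊆ S := by
      rintro e ⟨⟨a, b, c⟩, ⟨ha, hb, hc⟩, rfl⟩
      refine ⟨a - ζ * (a * c), b + ζ * (a * c), ?_, ?_, rfl⟩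
      · rw [hE]; exact ⟨a, ha, b, hb, c, hc, rfl, rfl⟩
      · intro hcon
        have hac : a * c ∈ A * A := Set.mul_mem_mul ha hc
        have := (key a ha (a*c) hac b hb (a*c) hac false true
          (by simpa [sub_eq_add_neg] using hcon)).2.2
        simp at this
    have hinj : Set.InjOn h (A ×ˢ A ×ˢ A) := by
      rintro ⟨a, b, c⟩ ⟨ha, hb, hc⟩ ⟨a', b', c'⟩ ⟨ha', hb', hc'⟩ he
      have hac : a * c ∈ A * A := Set.mul_mem_mul ha hc
      have hac' : a' * c' ∈ A * A := Set.mul_mem_mul ha' hc'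
      simp only [hh, Sym2.eq_iff] at he
      rcases he with ⟨h1, h2⟩ | ⟨h1, h2⟩
      · have k1 := key a ha (a*c) hac a' ha' (a'*c') hac' false false
          (by simpa [sub_eq_add_neg] using h1)
        have k2 := key b hb (a*c) hac b' hb' (a'*c') hac' true true
          (by simpa using h2)
        have hcc : c = c' := by
          have := k1.2.1
          rw [k1.1] at this
          exact mul_left_cancel₀ (hA0 a' ha') this
        exact Prod.ext k1.1 (Prod.ext k2.1 hcc)
      · have := (key a ha (a*c) hac b' hb' (a'*c') hac' false true
          (by simpa [sub_eq_add_neg] using h1)).2.2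
        simp at this
    have hcard : (h '' (A ×ˢ A ×ˢ A)).ncard = n ^ 3 := by
      rw [Set.ncard_image_of_injOn hinj, ← Nat.card_coe_set_eq,
        Nat.card_congr (Equiv.Set.prod A (A ×ˢ A)),
        Nat.card_prod, Nat.card_congr (Equiv.Set.prod A A), Nat.card_prod,
        Nat.card_coe_set_eq, hn]
      ring
    have hle : (n : ℕ) ^ 3 ≤ S.ncard := hcard ▸ Set.ncard_le_ncard hsub hSfin
    have : ((n : ℝ)) ^ 3 ≤ (S.ncard : ℝ) := by exact_mod_cast hle
    linarith
  -- Part 3 : sums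
  have part3 : {s : ℝ | ∃ x y : ℝ, E x y ∧ s = x + y} ⊆ A + A := by
    rintro s ⟨x, y, hxy, rfl⟩
    rw [hE] at hxy
    obtain ⟨a, ha, b, hb, c, hc, rfl, rfl⟩ := hxy
    have : a - ζ * (a * c) + (b + ζ * (a * c)) = a + b := by ring
    rw [this]
    exact Set.add_mem_add ha hb
  have part4 : (({s : ℝ | ∃ x y : ℝ, E x y ∧ s = x + y}.ncard : ℝ) ≤ (n : ℝ) ^ (2 - α)) := by
    have := Set.ncard_le_ncard part3 hApA
    calc ({s : ℝ | ∃ x y : ℝ, E x y ∧ s = x + y}.ncard : ℝ) ≤ ((A + A).ncard : ℝ) := by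
          exact_mod_cast this
      _ ≤ (n : ℝ) ^ (2 - α) := hsum
  -- Part 5 : ratios
  have part5 : (({r : ℝ | ∃ x y : ℝ, E x y ∧ (r = x / y ∨ r = y / x)}.ncard : ℝ) ≤
      2 * n * (A / A).ncard) := by
    set f : ℝ × ℝ × Bool → ℝ := fun p =>
      if p.2.2 then (p.1 + ζ * p.2.1) / (1 - ζ * p.2.1)
      else (1 - ζ * p.2.1) / (p.1 + ζ * p.2.1) with hf
    set P := (A / A) ×ˢ A ×ˢ (Set.univ : Set Bool) with hP
    have hPfin : P.Finite := (hAdA.prod (hfin.prod (Set.finite_univ)))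
    have hsub : {r : ℝ | ∃ x y : ℝ, E x y ∧ (r = x / y ∨ r = y / x)} ⊆ f '' P := by
      rintro r ⟨x, y, hxy, hr⟩
      rw [hE] at hxy
      obtain ⟨a, ha, b, hb, c, hc, rfl, rfl⟩ := hxy
      have ha0 := hA0 a ha
      have hba : b / a ∈ A / A := Set.div_mem_div hb ha
      have hxa : (a - ζ * (a * c)) / a = 1 - ζ * c := by
        field_simp
      have hya : (b + ζ * (a * c)) / a = b / a + ζ * c := by
        field_simp
      rcases hr with rfl | rfl
      · refine ⟨(b / a, c, false), ⟨hba, hc, trivial⟩, ?_⟩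
        simp only [hf]
        rw [if_neg (by simp), ← hxa, ← hya, div_div_aux _ _ a ha0]
      · refine ⟨(b / a, c, true), ⟨hba, hc, trivial⟩, ?_⟩
        simp only [hf]
        rw [if_pos trivial, ← hxa, ← hya, div_div_aux _ _ a ha0]
    have hcardP : P.ncard = (A / A).ncard * n * 2 := by
      rw [← Nat.card_coe_set_eq, Nat.card_congr (Equiv.Set.prod _ _), Nat.card_prod,
        Nat.card_congr (Equiv.Set.prod _ _), Nat.card_prod, Nat.card_coe_set_eq,
        Nat.card_coe_set_eq, hn, Nat.card_coe_set_eq, Set.ncard_univ,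
        Nat.card_eq_fintype_card, Fintype.card_bool]
      ring
    have h1 : {r : ℝ | ∃ x y : ℝ, E x y ∧ (r = x / y ∨ r = y / x)}.ncard ≤
        (A / A).ncard * n * 2 := by
      calc _ ≤ (f '' P).ncard := Set.ncard_le_ncard hsub (hPfin.image _)
        _ ≤ P.ncard := Set.ncard_image_le hPfin
        _ = _ := hcardP
    calc (({r : ℝ | ∃ x y : ℝ, E x y ∧ (r = x / y ∨ r = y / x)}.ncard : ℝ))
        ≤ ((A / A).ncard * n * 2 : ℕ) := by exact_mod_cast h1
      _ = 2 * n * (A / A).ncard := by push_cast; ring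
  have part6 : (({r : ℝ | ∃ x y : ℝ, E x y ∧ (r = x / y ∨ r = y / x)}.ncard : ℝ) ≤
      2 * (n : ℝ) ^ (3 - β)) := by
    have hnpos : (0 : ℝ) < n := by exact_mod_cast hn1
    have hrw : (n : ℝ) ^ (3 - β) = n * (n : ℝ) ^ (2 - β) := by
      rw [show (3 : ℝ) - β = 1 + (2 - β) by ring, Real.rpow_add hnpos, Real.rpow_one]
    calc ({r : ℝ | ∃ x y : ℝ, E x y ∧ (r = x / y ∨ r = y / x)}.ncard : ℝ)
        ≤ 2 * n * (A / A).ncard := part5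
      _ ≤ 2 * n * (n : ℝ) ^ (2 - β) := by
          have : (0:ℝ) ≤ 2 * n := by positivity
          exact mul_le_mul_of_nonneg_left hdiv this
      _ = 2 * (n : ℝ) ^ (3 - β) := by rw [hrw]; ring
  exact ⟨part1, part2, part3, part4, part5, part6⟩
end
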